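/- Let M ⊆ ℂ^4 be defined by w_1 − conj(w_1) = 2i z conj(z), w_2 − conj(w_2) = 2i z conj(z)(z + conj(z)), w_3 − conj(w_3) = 2 z conj(z)(z − conj(z)), with weights [z] = 1, [w_1] = 2, [w_2] = [w_3] = 3. Every polynomial infinitesimal CR-automorphism of M of the form Z ∂_z + W^1 ∂_{w_1} + W^2 ∂_{w_2} + W^3 ∂_{w_3} in which Z, W^1, W^2, W^3 are weighted homogeneous polynomials of weights 2, 3, 4, 4 respectively (i.e. a weighted homogeneous infinitesimal CR-automorphism of weight 1) is zero; that is, the component g_1 of aut_CR(M) is trivial. -/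
import Mathlib


/-!
STATEMENT 14: for M ⊆ ℂ⁴ defined by w₁ − w̄₁ = 2i z z̄, w₂ − w̄₂ = 2i z z̄ (z + z̄),
w₃ − w̄₃ = 2 z z̄ (z − z̄), with weights [z] = 1, [w₁] = 2, [w₂] = [w₃] = 3, every
polynomial infinitesimal CR-automorphism Z ∂_z + Σ W^l ∂_{w_l} with Z, W¹, W², W³
weighted homogeneous of weights 2, 3, 4, 4 (i.e. every element of the component g₁ of
aut_CR(M)) is zero.
-/

open MvPolynomial Complex

noncomputable section

/-- Points of ℂ⁴ in coordinates (z, w₁, w₂, w₃). -/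
abbrev Pt := Fin 4 → ℂ

/-- Polynomials in ℂ[z, w₁, w₂, w₃] : variable 0 is z, variables 1, 2, 3 are w₁, w₂, w₃. -/
abbrev CPoly := MvPolynomial (Fin 4) ℂ

/-- Tuples (Z, W¹, W², W³), identified with the vector field Z ∂_z + Σ_l W^l ∂_{w_l}. -/
abbrev Tup := Fin 4 → CPoly

/-- The weights [z] = 1, [w₁] = 2, [w₂] = [w₃] = 3. -/
def wt : Fin 4 → ℕ := ![1, 2, 3, 3]

/-- The CR-manifold M ⊆ ℂ⁴. -/
def Mset : Set Pt :=
  {p | p 1 - starRingEnd ℂ (p 1) = 2 * I * p 0 * starRingEnd ℂ (p 0) ∧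
       p 2 - starRingEnd ℂ (p 2) =
         2 * I * p 0 * starRingEnd ℂ (p 0) * (p 0 + starRingEnd ℂ (p 0)) ∧
       p 3 - starRingEnd ℂ (p 3) =
         2 * p 0 * starRingEnd ℂ (p 0) * (p 0 - starRingEnd ℂ (p 0))}

/-- (Z, W¹, W², W³) is a (polynomial) infinitesimal CR-automorphism of M : the three
tangency identities hold at every point of M. -/
def IsCRAut (F : Tup) : Prop :=
  ∀ p ∈ Mset,
    (eval p (F 1) - starRingEnd ℂ (eval p (F 1))
      - 2 * I * starRingEnd ℂ (p 0) * eval p (F 0)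
      - 2 * I * p 0 * starRingEnd ℂ (eval p (F 0)) = 0) ∧
    (eval p (F 2) - starRingEnd ℂ (eval p (F 2))
      - 4 * I * p 0 * starRingEnd ℂ (p 0) * eval p (F 0)
      - 2 * I * (starRingEnd ℂ (p 0)) ^ 2 * eval p (F 0)
      - 2 * I * (p 0) ^ 2 * starRingEnd ℂ (eval p (F 0))
      - 4 * I * p 0 * starRingEnd ℂ (p 0) * starRingEnd ℂ (eval p (F 0)) = 0) ∧
    (eval p (F 3) - starRingEnd ℂ (eval p (F 3))
      - 4 * p 0 * starRingEnd ℂ (p 0) * eval p (F 0)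
      + 2 * (starRingEnd ℂ (p 0)) ^ 2 * eval p (F 0)
      - 2 * (p 0) ^ 2 * starRingEnd ℂ (eval p (F 0))
      + 4 * p 0 * starRingEnd ℂ (p 0) * starRingEnd ℂ (eval p (F 0)) = 0)

/-- exponent tuple -/
def D (a b c d : ℕ) : Fin 4 →₀ ℕ :=
  Finsupp.single 0 a + Finsupp.single 1 b + Finsupp.single 2 c + Finsupp.single 3 d

lemma D_apply0 (a b c d : ℕ) : D a b c d 0 = a := by simp [D, Finsupp.single_apply]
lemma D_apply1 (a b c d : ℕ) : D a b c d 1 = b := by simp [D, Finsupp.single_apply]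
lemma D_apply2 (a b c d : ℕ) : D a b c d 2 = c := by simp [D, Finsupp.single_apply]
lemma D_apply3 (a b c d : ℕ) : D a b c d 3 = d := by simp [D, Finsupp.single_apply]

lemma eq_D (d : Fin 4 →₀ ℕ) (a b c e : ℕ) (h0 : d 0 = a) (h1 : d 1 = b)
    (h2 : d 2 = c) (h3 : d 3 = e) : d = D a b c e := by
  ext i; fin_cases i
  · show d 0 = D a b c e 0; rw [h0, D_apply0]
  · show d 1 = D a b c e 1; rw [h1, D_apply1]
  · show d 2 = D a b c e 2; rw [h2, D_apply2]
  · show d 3 = D a b c e 3; rw [h3, D_apply3]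

lemma D_ne {a b c d a' b' c' d' : ℕ} (h : ¬(a = a' ∧ b = b' ∧ c = c' ∧ d = d')) :
    D a b c d ≠ D a' b' c' d' := by
  intro hc
  exact h ⟨by rw [← D_apply0 a b c d, hc, D_apply0],
           by rw [← D_apply1 a b c d, hc, D_apply1],
           by rw [← D_apply2 a b c d, hc, D_apply2],
           by rw [← D_apply3 a b c d, hc, D_apply3]⟩

lemma prod_D (p : Pt) (a b c d : ℕ) :
    (D a b c d).prod (fun i e => p i ^ e) = p 0 ^ a * p 1 ^ b * p 2 ^ c * p 3 ^ d := by
  rw [Finsupp.prod_fintype _ _ (by intro i; rfl), Fin.prod_univ_four,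
    D_apply0, D_apply1, D_apply2, D_apply3]

lemma wt_sum (d : Fin 4 →₀ ℕ) (n : ℕ) (h : Finsupp.weight wt d = n) :
    d 0 * 1 + d 1 * 2 + d 2 * 3 + d 3 * 3 = n := by
  rw [Finsupp.weight_apply, Finsupp.sum_fintype] at h
  · simpa [Fin.sum_univ_four, wt, mul_comm] using h
  · intro i; simp

lemma support_subset (P : CPoly) {n : ℕ} (h : P.IsWeightedHomogeneous wt n)
    (S : Finset (Fin 4 →₀ ℕ))
    (hS : ∀ d : Fin 4 →₀ ℕ, d 0 * 1 + d 1 * 2 + d 2 * 3 + d 3 * 3 = n → d ∈ S) :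
    P.support ⊆ S := fun d hd => hS d (wt_sum d n (h (mem_support_iff.mp hd)))

lemma eval_of_subset (P : CPoly) (S : Finset (Fin 4 →₀ ℕ)) (h : P.support ⊆ S) (p : Pt) :
    eval p P = ∑ d ∈ S, coeff d P * ∏ i, p i ^ d i := by
  rw [eval_eq']
  exact Finset.sum_subset h (by intro d _ hd; simp only [mem_support_iff, not_not] at hd
                                simp [hd])

lemma prod_D' (p : Pt) (a b c d : ℕ) :
    (∏ i, p i ^ (D a b c d) i) = p 0 ^ a * p 1 ^ b * p 2 ^ c * p 3 ^ d := by
  rw [Fin.prod_univ_four, D_apply0, D_apply1, D_apply2, D_apply3]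

lemma eval_wt2 (P : CPoly) (h : P.IsWeightedHomogeneous wt 2) (p : Pt) :
    eval p P = coeff (D 2 0 0 0) P * p 0 ^ 2 + coeff (D 0 1 0 0) P * p 1 := by
  rw [eval_of_subset P {D 2 0 0 0, D 0 1 0 0}
    (support_subset P h _ (by
      intro d hd
      have : (d 0 = 2 ∧ d 1 = 0 ∧ d 2 = 0 ∧ d 3 = 0) ∨
             (d 0 = 0 ∧ d 1 = 1 ∧ d 2 = 0 ∧ d 3 = 0) := by omega
      simp only [Finset.mem_insert, Finset.mem_singleton]
      rcases this with ⟨h0,h1,h2,h3⟩|⟨h0,h1,h2,h3⟩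
      · exact Or.inl (eq_D d _ _ _ _ h0 h1 h2 h3)
      · exact Or.inr (eq_D d _ _ _ _ h0 h1 h2 h3))) p]
  rw [Finset.sum_insert (by simp only [Finset.mem_singleton]; exact D_ne (by omega)),
    Finset.sum_singleton, prod_D', prod_D']
  ring

lemma eval_wt3 (P : CPoly) (h : P.IsWeightedHomogeneous wt 3) (p : Pt) :
    eval p P = coeff (D 3 0 0 0) P * p 0 ^ 3 + coeff (D 1 1 0 0) P * (p 0 * p 1)
      + coeff (D 0 0 1 0) P * p 2 + coeff (D 0 0 0 1) P * p 3 := by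
  rw [eval_of_subset P {D 3 0 0 0, D 1 1 0 0, D 0 0 1 0, D 0 0 0 1}
    (support_subset P h _ (by
      intro d hd
      have : (d 0 = 3 ∧ d 1 = 0 ∧ d 2 = 0 ∧ d 3 = 0) ∨
             (d 0 = 1 ∧ d 1 = 1 ∧ d 2 = 0 ∧ d 3 = 0) ∨
             (d 0 = 0 ∧ d 1 = 0 ∧ d 2 = 1 ∧ d 3 = 0) ∨
             (d 0 = 0 ∧ d 1 = 0 ∧ d 2 = 0 ∧ d 3 = 1) := by omega
      simp only [Finset.mem_insert, Finset.mem_singleton]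
      rcases this with ⟨h0,h1,h2,h3⟩|⟨h0,h1,h2,h3⟩|⟨h0,h1,h2,h3⟩|⟨h0,h1,h2,h3⟩
      · exact Or.inl (eq_D d _ _ _ _ h0 h1 h2 h3)
      · exact Or.inr (Or.inl (eq_D d _ _ _ _ h0 h1 h2 h3))
      · exact Or.inr (Or.inr (Or.inl (eq_D d _ _ _ _ h0 h1 h2 h3)))
      · exact Or.inr (Or.inr (Or.inr (eq_D d _ _ _ _ h0 h1 h2 h3))))) p]
  rw [Finset.sum_insert (by
      simp only [Finset.mem_insert, Finset.mem_singleton, not_or]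
      exact ⟨D_ne (by omega), D_ne (by omega), D_ne (by omega)⟩),
    Finset.sum_insert (by
      simp only [Finset.mem_insert, Finset.mem_singleton, not_or]
      exact ⟨D_ne (by omega), D_ne (by omega)⟩),
    Finset.sum_insert (by
      simp only [Finset.mem_singleton]; exact D_ne (by omega)),
    Finset.sum_singleton, prod_D', prod_D', prod_D', prod_D']
  ring

lemma eval_wt4 (P : CPoly) (h : P.IsWeightedHomogeneous wt 4) (p : Pt) :
    eval p P = coeff (D 4 0 0 0) P * p 0 ^ 4 + coeff (D 2 1 0 0) P * (p 0 ^ 2 * p 1)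
      + coeff (D 0 2 0 0) P * p 1 ^ 2 + coeff (D 1 0 1 0) P * (p 0 * p 2)
      + coeff (D 1 0 0 1) P * (p 0 * p 3) := by
  rw [eval_of_subset P {D 4 0 0 0, D 2 1 0 0, D 0 2 0 0, D 1 0 1 0, D 1 0 0 1}
    (support_subset P h _ (by
      intro d hd
      have : (d 0 = 4 ∧ d 1 = 0 ∧ d 2 = 0 ∧ d 3 = 0) ∨
             (d 0 = 2 ∧ d 1 = 1 ∧ d 2 = 0 ∧ d 3 = 0) ∨
             (d 0 = 0 ∧ d 1 = 2 ∧ d 2 = 0 ∧ d 3 = 0) ∨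
             (d 0 = 1 ∧ d 1 = 0 ∧ d 2 = 1 ∧ d 3 = 0) ∨
             (d 0 = 1 ∧ d 1 = 0 ∧ d 2 = 0 ∧ d 3 = 1) := by omega
      simp only [Finset.mem_insert, Finset.mem_singleton]
      rcases this with ⟨h0,h1,h2,h3⟩|⟨h0,h1,h2,h3⟩|⟨h0,h1,h2,h3⟩|⟨h0,h1,h2,h3⟩|⟨h0,h1,h2,h3⟩
      · exact Or.inl (eq_D d _ _ _ _ h0 h1 h2 h3)
      · exact Or.inr (Or.inl (eq_D d _ _ _ _ h0 h1 h2 h3))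
      · exact Or.inr (Or.inr (Or.inl (eq_D d _ _ _ _ h0 h1 h2 h3)))
      · exact Or.inr (Or.inr (Or.inr (Or.inl (eq_D d _ _ _ _ h0 h1 h2 h3))))
      · exact Or.inr (Or.inr (Or.inr (Or.inr (eq_D d _ _ _ _ h0 h1 h2 h3)))))) p]
  rw [Finset.sum_insert (by
      simp only [Finset.mem_insert, Finset.mem_singleton, not_or]
      exact ⟨D_ne (by omega), D_ne (by omega), D_ne (by omega), D_ne (by omega)⟩),
    Finset.sum_insert (by
      simp only [Finset.mem_insert, Finset.mem_singleton, not_or]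
      exact ⟨D_ne (by omega), D_ne (by omega), D_ne (by omega)⟩),
    Finset.sum_insert (by
      simp only [Finset.mem_insert, Finset.mem_singleton, not_or]
      exact ⟨D_ne (by omega), D_ne (by omega)⟩),
    Finset.sum_insert (by
      simp only [Finset.mem_singleton]; exact D_ne (by omega)),
    Finset.sum_singleton, prod_D', prod_D', prod_D', prod_D', prod_D']
  ring

set_option maxHeartbeats 4000000 in
theorem stmt14 (F : Tup)
    (haut : IsCRAut F)
    -- the vector field is weighted homogeneous of weight 1 :  Z, W¹, W², W³ are weighted
    -- homogeneous of weights [z] + 1 = 2, [w₁] + 1 = 3, [w₂] + 1 = 4, [w₃] + 1 = 4 :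
    (h0 : (F 0).IsWeightedHomogeneous wt 2)
    (h1 : (F 1).IsWeightedHomogeneous wt 3)
    (h2 : (F 2).IsWeightedHomogeneous wt 4)
    (h3 : (F 3).IsWeightedHomogeneous wt 4) :
    F = 0 := by
  
  have hev0 := eval_wt2 (F 0) h0
  have hev1 := eval_wt3 (F 1) h1
  have hev2 := eval_wt4 (F 2) h2
  have hev3 := eval_wt4 (F 3) h3
  set a1 := coeff (D 2 0 0 0) (F 0) with ha1def
  set a2 := coeff (D 0 1 0 0) (F 0) with ha2def
  set b1 := coeff (D 3 0 0 0) (F 1) with hb1def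
  set b2 := coeff (D 1 1 0 0) (F 1) with hb2def
  set b3 := coeff (D 0 0 1 0) (F 1) with hb3def
  set b4 := coeff (D 0 0 0 1) (F 1) with hb4def
  set c1 := coeff (D 4 0 0 0) (F 2) with hc1def
  set c2 := coeff (D 2 1 0 0) (F 2) with hc2def
  set c3 := coeff (D 0 2 0 0) (F 2) with hc3def
  set c4 := coeff (D 1 0 1 0) (F 2) with hc4def
  set c5 := coeff (D 1 0 0 1) (F 2) with hc5def
  set d1 := coeff (D 4 0 0 0) (F 3) with hd1def
  set d2 := coeff (D 2 1 0 0) (F 3) with hd2def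
  set d3 := coeff (D 0 2 0 0) (F 3) with hd3def
  set d4 := coeff (D 1 0 1 0) (F 3) with hd4def
  set d5 := coeff (D 1 0 0 1) (F 3) with hd5def
  have hm0 : (![1, I, 2 * I, 0] : Pt) ∈ Mset := by
    refine ⟨?_, ?_, ?_⟩ <;>
      simp only [Matrix.cons_val_zero, Matrix.cons_val_one, Matrix.head_cons,
      Matrix.cons_val_two, Matrix.tail_cons, Matrix.cons_val_three,
      map_add, map_sub, map_mul, map_pow, map_neg, map_zero, map_one, map_ofNat,
      Complex.conj_I]
    · linear_combination (0 : ℂ) * Complex.I_sq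
    · linear_combination (0 : ℂ) * Complex.I_sq
    · linear_combination (0 : ℂ) * Complex.I_sq
  obtain ⟨eq0_1, eq0_2, eq0_3⟩ := haut _ hm0
  rw [hev0, hev1] at eq0_1
  rw [hev0, hev2] at eq0_2
  rw [hev0, hev3] at eq0_3
  simp only [Matrix.cons_val_zero, Matrix.cons_val_one, Matrix.head_cons,
      Matrix.cons_val_two, Matrix.tail_cons, Matrix.cons_val_three,
      map_add, map_sub, map_mul, map_pow, map_neg, map_zero, map_one, map_ofNat,
      Complex.conj_I] at eq0_1 eq0_2 eq0_3
  have hm1 : (![1, 1 + I, 2 * I, 0] : Pt) ∈ Mset := by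
    refine ⟨?_, ?_, ?_⟩ <;>
      simp only [Matrix.cons_val_zero, Matrix.cons_val_one, Matrix.head_cons,
      Matrix.cons_val_two, Matrix.tail_cons, Matrix.cons_val_three,
      map_add, map_sub, map_mul, map_pow, map_neg, map_zero, map_one, map_ofNat,
      Complex.conj_I]
    · linear_combination (0 : ℂ) * Complex.I_sq
    · linear_combination (0 : ℂ) * Complex.I_sq
    · linear_combination (0 : ℂ) * Complex.I_sq
  obtain ⟨eq1_1, eq1_2, eq1_3⟩ := haut _ hm1
  rw [hev0, hev1] at eq1_1
  rw [hev0, hev2] at eq1_2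
  rw [hev0, hev3] at eq1_3
  simp only [Matrix.cons_val_zero, Matrix.cons_val_one, Matrix.head_cons,
      Matrix.cons_val_two, Matrix.tail_cons, Matrix.cons_val_three,
      map_add, map_sub, map_mul, map_pow, map_neg, map_zero, map_one, map_ofNat,
      Complex.conj_I] at eq1_1 eq1_2 eq1_3
  have hm2 : (![1, I, 1 + 2 * I, 0] : Pt) ∈ Mset := by
    refine ⟨?_, ?_, ?_⟩ <;>
      simp only [Matrix.cons_val_zero, Matrix.cons_val_one, Matrix.head_cons,
      Matrix.cons_val_two, Matrix.tail_cons, Matrix.cons_val_three,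
      map_add, map_sub, map_mul, map_pow, map_neg, map_zero, map_one, map_ofNat,
      Complex.conj_I]
    · linear_combination (0 : ℂ) * Complex.I_sq
    · linear_combination (0 : ℂ) * Complex.I_sq
    · linear_combination (0 : ℂ) * Complex.I_sq
  obtain ⟨eq2_1, eq2_2, eq2_3⟩ := haut _ hm2
  rw [hev0, hev1] at eq2_1
  rw [hev0, hev2] at eq2_2
  rw [hev0, hev3] at eq2_3
  simp only [Matrix.cons_val_zero, Matrix.cons_val_one, Matrix.head_cons,
      Matrix.cons_val_two, Matrix.tail_cons, Matrix.cons_val_three,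
      map_add, map_sub, map_mul, map_pow, map_neg, map_zero, map_one, map_ofNat,
      Complex.conj_I] at eq2_1 eq2_2 eq2_3
  have hm3 : (![1, I, 2 * I, 1] : Pt) ∈ Mset := by
    refine ⟨?_, ?_, ?_⟩ <;>
      simp only [Matrix.cons_val_zero, Matrix.cons_val_one, Matrix.head_cons,
      Matrix.cons_val_two, Matrix.tail_cons, Matrix.cons_val_three,
      map_add, map_sub, map_mul, map_pow, map_neg, map_zero, map_one, map_ofNat,
      Complex.conj_I]
    · linear_combination (0 : ℂ) * Complex.I_sq
    · linear_combination (0 : ℂ) * Complex.I_sq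
    · linear_combination (0 : ℂ) * Complex.I_sq
  obtain ⟨eq3_1, eq3_2, eq3_3⟩ := haut _ hm3
  rw [hev0, hev1] at eq3_1
  rw [hev0, hev2] at eq3_2
  rw [hev0, hev3] at eq3_3
  simp only [Matrix.cons_val_zero, Matrix.cons_val_one, Matrix.head_cons,
      Matrix.cons_val_two, Matrix.tail_cons, Matrix.cons_val_three,
      map_add, map_sub, map_mul, map_pow, map_neg, map_zero, map_one, map_ofNat,
      Complex.conj_I] at eq3_1 eq3_2 eq3_3
  have hm4 : (![I, I, 0, 2 * I] : Pt) ∈ Mset := by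
    refine ⟨?_, ?_, ?_⟩ <;>
      simp only [Matrix.cons_val_zero, Matrix.cons_val_one, Matrix.head_cons,
      Matrix.cons_val_two, Matrix.tail_cons, Matrix.cons_val_three,
      map_add, map_sub, map_mul, map_pow, map_neg, map_zero, map_one, map_ofNat,
      Complex.conj_I]
    · linear_combination ((2 : ℂ) * I) * Complex.I_sq
    · linear_combination (0 : ℂ) * Complex.I_sq
    · linear_combination ((4 : ℂ) * I) * Complex.I_sq
  obtain ⟨eq4_1, eq4_2, eq4_3⟩ := haut _ hm4
  rw [hev0, hev1] at eq4_1
  rw [hev0, hev2] at eq4_2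
  rw [hev0, hev3] at eq4_3
  simp only [Matrix.cons_val_zero, Matrix.cons_val_one, Matrix.head_cons,
      Matrix.cons_val_two, Matrix.tail_cons, Matrix.cons_val_three,
      map_add, map_sub, map_mul, map_pow, map_neg, map_zero, map_one, map_ofNat,
      Complex.conj_I] at eq4_1 eq4_2 eq4_3
  have hm5 : (![I, 1 + I, 0, 2 * I] : Pt) ∈ Mset := by
    refine ⟨?_, ?_, ?_⟩ <;>
      simp only [Matrix.cons_val_zero, Matrix.cons_val_one, Matrix.head_cons,
      Matrix.cons_val_two, Matrix.tail_cons, Matrix.cons_val_three,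
      map_add, map_sub, map_mul, map_pow, map_neg, map_zero, map_one, map_ofNat,
      Complex.conj_I]
    · linear_combination ((2 : ℂ) * I) * Complex.I_sq
    · linear_combination (0 : ℂ) * Complex.I_sq
    · linear_combination ((4 : ℂ) * I) * Complex.I_sq
  obtain ⟨eq5_1, eq5_2, eq5_3⟩ := haut _ hm5
  rw [hev0, hev1] at eq5_1
  rw [hev0, hev2] at eq5_2
  rw [hev0, hev3] at eq5_3
  simp only [Matrix.cons_val_zero, Matrix.cons_val_one, Matrix.head_cons,
      Matrix.cons_val_two, Matrix.tail_cons, Matrix.cons_val_three,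
      map_add, map_sub, map_mul, map_pow, map_neg, map_zero, map_one, map_ofNat,
      Complex.conj_I] at eq5_1 eq5_2 eq5_3
  have hm6 : (![I, I, 1, 2 * I] : Pt) ∈ Mset := by
    refine ⟨?_, ?_, ?_⟩ <;>
      simp only [Matrix.cons_val_zero, Matrix.cons_val_one, Matrix.head_cons,
      Matrix.cons_val_two, Matrix.tail_cons, Matrix.cons_val_three,
      map_add, map_sub, map_mul, map_pow, map_neg, map_zero, map_one, map_ofNat,
      Complex.conj_I]
    · linear_combination ((2 : ℂ) * I) * Complex.I_sq
    · linear_combination (0 : ℂ) * Complex.I_sq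
    · linear_combination ((4 : ℂ) * I) * Complex.I_sq
  obtain ⟨eq6_1, eq6_2, eq6_3⟩ := haut _ hm6
  rw [hev0, hev1] at eq6_1
  rw [hev0, hev2] at eq6_2
  rw [hev0, hev3] at eq6_3
  simp only [Matrix.cons_val_zero, Matrix.cons_val_one, Matrix.head_cons,
      Matrix.cons_val_two, Matrix.tail_cons, Matrix.cons_val_three,
      map_add, map_sub, map_mul, map_pow, map_neg, map_zero, map_one, map_ofNat,
      Complex.conj_I] at eq6_1 eq6_2 eq6_3
  have hm7 : (![I, I, 0, 1 + 2 * I] : Pt) ∈ Mset := by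
    refine ⟨?_, ?_, ?_⟩ <;>
      simp only [Matrix.cons_val_zero, Matrix.cons_val_one, Matrix.head_cons,
      Matrix.cons_val_two, Matrix.tail_cons, Matrix.cons_val_three,
      map_add, map_sub, map_mul, map_pow, map_neg, map_zero, map_one, map_ofNat,
      Complex.conj_I]
    · linear_combination ((2 : ℂ) * I) * Complex.I_sq
    · linear_combination (0 : ℂ) * Complex.I_sq
    · linear_combination ((4 : ℂ) * I) * Complex.I_sq
  obtain ⟨eq7_1, eq7_2, eq7_3⟩ := haut _ hm7
  rw [hev0, hev1] at eq7_1
  rw [hev0, hev2] at eq7_2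
  rw [hev0, hev3] at eq7_3
  simp only [Matrix.cons_val_zero, Matrix.cons_val_one, Matrix.head_cons,
      Matrix.cons_val_two, Matrix.tail_cons, Matrix.cons_val_three,
      map_add, map_sub, map_mul, map_pow, map_neg, map_zero, map_one, map_ofNat,
      Complex.conj_I] at eq7_1 eq7_2 eq7_3
  have hm8 : (![1 + I, 2 * I, 4 * I, 4 * I] : Pt) ∈ Mset := by
    refine ⟨?_, ?_, ?_⟩ <;>
      simp only [Matrix.cons_val_zero, Matrix.cons_val_one, Matrix.head_cons,
      Matrix.cons_val_two, Matrix.tail_cons, Matrix.cons_val_three,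
      map_add, map_sub, map_mul, map_pow, map_neg, map_zero, map_one, map_ofNat,
      Complex.conj_I]
    · linear_combination ((2 : ℂ) * I) * Complex.I_sq
    · linear_combination ((4 : ℂ) * I) * Complex.I_sq
    · linear_combination ((4 : ℂ) * I) * Complex.I_sq
  obtain ⟨eq8_1, eq8_2, eq8_3⟩ := haut _ hm8
  rw [hev0, hev1] at eq8_1
  rw [hev0, hev2] at eq8_2
  rw [hev0, hev3] at eq8_3
  simp only [Matrix.cons_val_zero, Matrix.cons_val_one, Matrix.head_cons,
      Matrix.cons_val_two, Matrix.tail_cons, Matrix.cons_val_three,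
      map_add, map_sub, map_mul, map_pow, map_neg, map_zero, map_one, map_ofNat,
      Complex.conj_I] at eq8_1 eq8_2 eq8_3
  have hm9 : (![1 + I, 1 + 2 * I, 4 * I, 4 * I] : Pt) ∈ Mset := by
    refine ⟨?_, ?_, ?_⟩ <;>
      simp only [Matrix.cons_val_zero, Matrix.cons_val_one, Matrix.head_cons,
      Matrix.cons_val_two, Matrix.tail_cons, Matrix.cons_val_three,
      map_add, map_sub, map_mul, map_pow, map_neg, map_zero, map_one, map_ofNat,
      Complex.conj_I]
    · linear_combination ((2 : ℂ) * I) * Complex.I_sq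
    · linear_combination ((4 : ℂ) * I) * Complex.I_sq
    · linear_combination ((4 : ℂ) * I) * Complex.I_sq
  obtain ⟨eq9_1, eq9_2, eq9_3⟩ := haut _ hm9
  rw [hev0, hev1] at eq9_1
  rw [hev0, hev2] at eq9_2
  rw [hev0, hev3] at eq9_3
  simp only [Matrix.cons_val_zero, Matrix.cons_val_one, Matrix.head_cons,
      Matrix.cons_val_two, Matrix.tail_cons, Matrix.cons_val_three,
      map_add, map_sub, map_mul, map_pow, map_neg, map_zero, map_one, map_ofNat,
      Complex.conj_I] at eq9_1 eq9_2 eq9_3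
  have hm10 : (![2, 1 + 4 * I, 16 * I, 0] : Pt) ∈ Mset := by
    refine ⟨?_, ?_, ?_⟩ <;>
      simp only [Matrix.cons_val_zero, Matrix.cons_val_one, Matrix.head_cons,
      Matrix.cons_val_two, Matrix.tail_cons, Matrix.cons_val_three,
      map_add, map_sub, map_mul, map_pow, map_neg, map_zero, map_one, map_ofNat,
      Complex.conj_I]
    · linear_combination (0 : ℂ) * Complex.I_sq
    · linear_combination (0 : ℂ) * Complex.I_sq
    · linear_combination (0 : ℂ) * Complex.I_sq
  obtain ⟨eq10_1, eq10_2, eq10_3⟩ := haut _ hm10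
  rw [hev0, hev1] at eq10_1
  rw [hev0, hev2] at eq10_2
  rw [hev0, hev3] at eq10_3
  simp only [Matrix.cons_val_zero, Matrix.cons_val_one, Matrix.head_cons,
      Matrix.cons_val_two, Matrix.tail_cons, Matrix.cons_val_three,
      map_add, map_sub, map_mul, map_pow, map_neg, map_zero, map_one, map_ofNat,
      Complex.conj_I] at eq10_1 eq10_2 eq10_3
  have hm11 : (![1 - I, 2 * I, 4 * I, -4 * I] : Pt) ∈ Mset := by
    refine ⟨?_, ?_, ?_⟩ <;>
      simp only [Matrix.cons_val_zero, Matrix.cons_val_one, Matrix.head_cons,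
      Matrix.cons_val_two, Matrix.tail_cons, Matrix.cons_val_three,
      map_add, map_sub, map_mul, map_pow, map_neg, map_zero, map_one, map_ofNat,
      Complex.conj_I]
    · linear_combination ((2 : ℂ) * I) * Complex.I_sq
    · linear_combination ((4 : ℂ) * I) * Complex.I_sq
    · linear_combination ((-4 : ℂ) * I) * Complex.I_sq
  obtain ⟨eq11_1, eq11_2, eq11_3⟩ := haut _ hm11
  rw [hev0, hev1] at eq11_1
  rw [hev0, hev2] at eq11_2
  rw [hev0, hev3] at eq11_3
  simp only [Matrix.cons_val_zero, Matrix.cons_val_one, Matrix.head_cons,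
      Matrix.cons_val_two, Matrix.tail_cons, Matrix.cons_val_three,
      map_add, map_sub, map_mul, map_pow, map_neg, map_zero, map_one, map_ofNat,
      Complex.conj_I] at eq11_1 eq11_2 eq11_3
  have hm12 : (![2 + I, 5 * I, 20 * I, 10 * I] : Pt) ∈ Mset := by
    refine ⟨?_, ?_, ?_⟩ <;>
      simp only [Matrix.cons_val_zero, Matrix.cons_val_one, Matrix.head_cons,
      Matrix.cons_val_two, Matrix.tail_cons, Matrix.cons_val_three,
      map_add, map_sub, map_mul, map_pow, map_neg, map_zero, map_one, map_ofNat,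
      Complex.conj_I]
    · linear_combination ((2 : ℂ) * I) * Complex.I_sq
    · linear_combination ((8 : ℂ) * I) * Complex.I_sq
    · linear_combination ((4 : ℂ) * I) * Complex.I_sq
  obtain ⟨eq12_1, eq12_2, eq12_3⟩ := haut _ hm12
  rw [hev0, hev1] at eq12_1
  rw [hev0, hev2] at eq12_2
  rw [hev0, hev3] at eq12_3
  simp only [Matrix.cons_val_zero, Matrix.cons_val_one, Matrix.head_cons,
      Matrix.cons_val_two, Matrix.tail_cons, Matrix.cons_val_three,
      map_add, map_sub, map_mul, map_pow, map_neg, map_zero, map_one, map_ofNat,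
      Complex.conj_I] at eq12_1 eq12_2 eq12_3
  have hza1 : a1 = 0 := by
    linear_combination ((-1/8 : ℂ) + (-7/8 : ℂ) * I) * eq0_2 +
      ((-3/8 : ℂ) + (1/8 : ℂ) * I) * eq0_3 +
      ((-1/48 : ℂ) + (-7/16 : ℂ) * I) * eq1_2 +
      ((-17/48 : ℂ) + (1/48 : ℂ) * I) * eq1_3 +
      ((-1/8 : ℂ) * I) * eq2_2 +
      ((-1/8 : ℂ)) * eq2_3 +
      ((-1/8 : ℂ) + (-1/2 : ℂ) * I) * eq3_2 +
      ((1/8 : ℂ) * I) * eq3_3 +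
      ((-1/2 : ℂ) * I) * eq4_2 +
      ((-1/2 : ℂ)) * eq4_3 +
      ((1/16 : ℂ) + (3/16 : ℂ) * I) * eq5_2 +
      ((-1/16 : ℂ) + (-1/16 : ℂ) * I) * eq5_3 +
      ((-1/8 : ℂ)) * eq6_2 +
      ((1/2 : ℂ) + (1/8 : ℂ) * I) * eq6_3 +
      ((1/8 : ℂ) * I) * eq7_2 +
      ((1/8 : ℂ)) * eq7_3 +
      ((1/16 : ℂ) + (3/32 : ℂ) * I) * eq8_2 +
      ((-5/32 : ℂ) + (-1/16 : ℂ) * I) * eq8_3 +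
      ((-1/16 : ℂ) + (-1/8 : ℂ) * I) * eq9_2 +
      ((1/8 : ℂ) + (1/16 : ℂ) * I) * eq9_3 +
      ((1/48 : ℂ) + (1/8 : ℂ) * I) * eq10_2 +
      ((1/24 : ℂ) + (-1/48 : ℂ) * I) * eq10_3 +
      (((9/16 : ℂ) + (-1/2 : ℂ) * I ^ 2 + (7/16 : ℂ) * I ^ 4) * a1 + ((-1/8 : ℂ) + (-1/8 : ℂ) * I ^ 2 + (1/2 : ℂ) * I ^ 3) * a2 + ((-1/16 : ℂ) + (-1/32 : ℂ) * I + (3/16 : ℂ) * I ^ 2 + (7/32 : ℂ) * I ^ 3) * c1 + ((1/8 : ℂ) * I + (1/4 : ℂ) * I ^ 2) * c2 + ((1/4 : ℂ) * I) * c3 + ((1/8 : ℂ) * I) * c4 + ((1/8 : ℂ) + (1/2 : ℂ) * I) * c5 + ((7/32 : ℂ) + (3/16 : ℂ) * I + (-1/32 : ℂ) * I ^ 2 + (-1/16 : ℂ) * I ^ 3) * d1 + ((1/16 : ℂ) + (-1/16 : ℂ) * I ^ 2) * d2 + ((1/4 : ℂ)) * d3 + ((1/8 : ℂ)) * d4 +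 ((-1/8 : ℂ) * I) * d5 + ((7/16 : ℂ) + (1/4 : ℂ) * I + (-1/8 : ℂ) * I ^ 2 + (1/4 : ℂ) * I ^ 3 + (7/16 : ℂ) * I ^ 4) * (starRingEnd ℂ a1) + ((1/8 : ℂ) + (-3/8 : ℂ) * I ^ 2 + (-1/2 : ℂ) * I ^ 3) * (starRingEnd ℂ a2) + ((1/16 : ℂ) + (1/32 : ℂ) * I + (1/16 : ℂ) * I ^ 2 + (-7/32 : ℂ) * I ^ 3) * (starRingEnd ℂ c1) + ((1/4 : ℂ) * I ^ 2) * (starRingEnd ℂ c2) + ((-1/4 : ℂ) * I) * (starRingEnd ℂ c3) + ((-1/8 : ℂ) * I) * (starRingEnd ℂ c4) + ((-1/8 : ℂ) + (-1/2 : ℂ) * I) * (starRingEnd ℂ c5) + ((-7/32 : ℂ) + (1/16 : ℂ) * I + (1/32 : ℂ) * I ^ 2 + (1/16 : ℂ) * I ^ 3) * (starRingEnd ℂ d1) + ((-1/16 : ℂ) + (-1/16 : ℂ) * I ^ 2) * (starRingEnd ℂ d2) + ((-1/4 : ℂ)) * (starRingEnd ℂ d3) + ((-1/8 : ℂ)) *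 (starRingEnd ℂ d4) + ((1/8 : ℂ) * I) * (starRingEnd ℂ d5)) * Complex.I_sq
  have hza2 : a2 = 0 := by
    linear_combination ((3/4 : ℂ) + (1/8 : ℂ) * I) * eq0_2 +
      ((-1/8 : ℂ) + (1/2 : ℂ) * I) * eq0_3 +
      ((5/12 : ℂ) + (1/48 : ℂ) * I) * eq1_2 +
      ((-1/48 : ℂ) + (3/8 : ℂ) * I) * eq1_3 +
      ((1/8 : ℂ)) * eq2_2 +
      ((1/8 : ℂ) * I) * eq2_3 +
      ((3/8 : ℂ) + (1/8 : ℂ) * I) * eq3_2 +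
      ((-1/8 : ℂ) + (1/8 : ℂ) * I) * eq3_3 +
      ((1/2 : ℂ)) * eq4_2 +
      ((1/2 : ℂ) * I) * eq4_3 +
      ((-1/8 : ℂ) + (-1/16 : ℂ) * I) * eq5_2 +
      ((1/16 : ℂ)) * eq5_3 +
      ((-1/8 : ℂ) + (1/8 : ℂ) * I) * eq6_2 +
      ((-1/8 : ℂ) + (-3/8 : ℂ) * I) * eq6_3 +
      ((-1/8 : ℂ)) * eq7_2 +
      ((-1/8 : ℂ) * I) * eq7_3 +
      ((-1/32 : ℂ) + (-1/16 : ℂ) * I) * eq8_2 +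
      ((1/16 : ℂ) + (3/32 : ℂ) * I) * eq8_3 +
      ((1/16 : ℂ) + (1/16 : ℂ) * I) * eq9_2 +
      ((-1/16 : ℂ) + (-1/16 : ℂ) * I) * eq9_3 +
      ((-5/48 : ℂ) + (-1/48 : ℂ) * I) * eq10_2 +
      ((1/48 : ℂ) + (-1/16 : ℂ) * I) * eq10_3 +
      (((1/8 : ℂ) + (1/2 : ℂ) * I + (-1/2 : ℂ) * I ^ 3 + (-1/8 : ℂ) * I ^ 4) * a1 + ((1 : ℂ) + (3/8 : ℂ) * I + (-3/4 : ℂ) * I ^ 2 + (-1/8 : ℂ) * I ^ 3) * a2 + ((-1/32 : ℂ) + (-1/16 : ℂ) * I + (-5/32 : ℂ) * I ^ 2 + (-1/16 : ℂ) * I ^ 3) * c1 + ((-1/16 : ℂ) + (-3/16 : ℂ) * I + (-1/16 : ℂ) * I ^ 2) * c2 + ((-1/4 : ℂ)) * c3 + ((-1/8 : ℂ)) * c4 + ((-3/8 : ℂ) + (-1/8 : ℂ) * I) * c5 + ((-1/16 : ℂ) + (-5/32 : ℂ) * I + (-1/16 : ℂ) * I ^ 2 + (-1/32 : ℂ) *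 I ^ 3) * d1 + ((-1/16 : ℂ) * I ^ 2) * d2 + ((-1/4 : ℂ) * I) * d3 + ((-1/8 : ℂ) * I) * d4 + ((1/8 : ℂ) + (-1/8 : ℂ) * I) * d5 + ((-1/8 : ℂ) + (-1/8 : ℂ) * I + (-1/4 : ℂ) * I ^ 2 + (-1/8 : ℂ) * I ^ 3 + (-1/8 : ℂ) * I ^ 4) * (starRingEnd ℂ a1) + ((1/8 : ℂ) * I + (1/8 : ℂ) * I ^ 3) * (starRingEnd ℂ a2) + ((1/32 : ℂ) + (-3/16 : ℂ) * I + (5/32 : ℂ) * I ^ 2 + (1/16 : ℂ) * I ^ 3) * (starRingEnd ℂ c1) + ((1/16 : ℂ) + (-3/16 : ℂ) * I + (-1/16 : ℂ) * I ^ 2) * (starRingEnd ℂ c2) + ((1/4 : ℂ)) * (starRingEnd ℂ c3) + ((1/8 : ℂ)) * (starRingEnd ℂ c4) + ((3/8 : ℂ) + (1/8 : ℂ) * I) * (starRingEnd ℂ c5) + ((1/16 : ℂ) + (5/32 : ℂ) * I + (-3/16 : ℂ) * I ^ 2 + (1/32 : ℂ) * I ^ 3) * (starRingEnd ℂ d1)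 + ((1/8 : ℂ) * I + (-1/16 : ℂ) * I ^ 2) * (starRingEnd ℂ d2) + ((1/4 : ℂ) * I) * (starRingEnd ℂ d3) + ((1/8 : ℂ) * I) * (starRingEnd ℂ d4) + ((-1/8 : ℂ) + (1/8 : ℂ) * I) * (starRingEnd ℂ d5)) * Complex.I_sq
  have hzb1 : b1 = 0 := by
    linear_combination ((1/4 : ℂ)) * eq0_1 +
      ((1/4 : ℂ) * I) * eq4_1 +
      ((-1/16 : ℂ) + (-1/16 : ℂ) * I) * eq8_1 +
      ((-1/16 : ℂ) + (1/16 : ℂ) * I) * eq11_1 +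
      (((1/4 : ℂ) * I + (-1/4 : ℂ) * I ^ 3) * a1 + ((7/8 : ℂ) + (-1/8 : ℂ) * I ^ 2) * b1 + ((1/4 : ℂ) * I + (1/4 : ℂ) * I ^ 3) * (starRingEnd ℂ a1) + ((1/8 : ℂ) + (-1/8 : ℂ) * I ^ 2) * (starRingEnd ℂ b1)) * Complex.I_sq
  have hzb2 : b2 = 0 := by
    linear_combination ((-1/2 : ℂ)) * eq0_1 +
      ((-1/4 : ℂ) + (-3/2 : ℂ) * I) * eq0_2 +
      ((-1 : ℂ) + (1/4 : ℂ) * I) * eq0_3 +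
      ((1/2 : ℂ)) * eq1_1 +
      ((-1/24 : ℂ) + (-5/6 : ℂ) * I) * eq1_2 +
      ((-3/4 : ℂ) + (1/24 : ℂ) * I) * eq1_3 +
      ((-1/4 : ℂ) * I) * eq2_2 +
      ((-1/4 : ℂ)) * eq2_3 +
      ((-1/4 : ℂ) + (-3/4 : ℂ) * I) * eq3_2 +
      ((-1/4 : ℂ) + (1/4 : ℂ) * I) * eq3_3 +
      ((1/2 : ℂ) * I) * eq4_1 +
      ((-1 : ℂ) * I) * eq4_2 +
      ((-1 : ℂ)) * eq4_3 +
      ((-1/2 : ℂ) * I) * eq5_1 +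
      ((1/8 : ℂ) + (1/4 : ℂ) * I) * eq5_2 +
      ((-1/8 : ℂ) * I) * eq5_3 +
      ((-1/4 : ℂ) + (1/4 : ℂ) * I) * eq6_2 +
      ((3/4 : ℂ) + (1/4 : ℂ) * I) * eq6_3 +
      ((1/4 : ℂ) * I) * eq7_2 +
      ((1/4 : ℂ)) * eq7_3 +
      ((1/8 : ℂ) + (1/16 : ℂ) * I) * eq8_2 +
      ((-3/16 : ℂ) + (-1/8 : ℂ) * I) * eq8_3 +
      ((-1/8 : ℂ) + (-1/8 : ℂ) * I) * eq9_2 +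
      ((1/8 : ℂ) + (1/8 : ℂ) * I) * eq9_3 +
      ((1/24 : ℂ) + (5/24 : ℂ) * I) * eq10_2 +
      ((1/8 : ℂ) + (-1/24 : ℂ) * I) * eq10_3 +
      (((-5/8 : ℂ) + (5/8 : ℂ) * I ^ 4) * a1 + ((-1/4 : ℂ) + (3/4 : ℂ) * I + (-1/4 : ℂ) * I ^ 2 + (3/4 : ℂ) * I ^ 3) * a2 + ((1/2 : ℂ)) * b2 + ((-1/8 : ℂ) + (1/16 : ℂ) * I + (3/8 : ℂ) * I ^ 2 + (5/16 : ℂ) * I ^ 3) * c1 + ((1/4 : ℂ) * I + (3/8 : ℂ) * I ^ 2) * c2 + ((1/2 : ℂ) * I) * c3 + ((1/4 : ℂ) * I) * c4 + ((1/4 : ℂ) + (3/4 : ℂ) * I) * c5 + ((5/16 : ℂ) + (3/8 : ℂ) * I + (1/16 : ℂ) * I ^ 2 + (-1/8 : ℂ) * I ^ 3) * d1 + ((1/8 : ℂ) + (1/8 : ℂ) * I + (-1/8 : ℂ) * I ^ 2) * d2 + ((1/2 : ℂ)) * d3 + ((1/4 : ℂ)) * d4 + ((1/4 : ℂ) + (-1/4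 : ℂ) * I) * d5 + ((5/8 : ℂ) + (1/2 : ℂ) * I + (-3/4 : ℂ) * I ^ 2 + (1/2 : ℂ) * I ^ 3 + (5/8 : ℂ) * I ^ 4) * (starRingEnd ℂ a1) + ((1/4 : ℂ) + (3/4 : ℂ) * I + (-3/4 : ℂ) * I ^ 2 + (-3/4 : ℂ) * I ^ 3) * (starRingEnd ℂ a2) + ((1/2 : ℂ)) * (starRingEnd ℂ b2) + ((1/8 : ℂ) + (-1/16 : ℂ) * I + (1/8 : ℂ) * I ^ 2 + (-5/16 : ℂ) * I ^ 3) * (starRingEnd ℂ c1) + ((3/8 : ℂ) * I ^ 2) * (starRingEnd ℂ c2) + ((-1/2 : ℂ) * I) * (starRingEnd ℂ c3) + ((-1/4 : ℂ) * I) * (starRingEnd ℂ c4) + ((-1/4 : ℂ) + (-3/4 : ℂ) * I) * (starRingEnd ℂ c5) + ((-5/16 : ℂ) + (1/8 : ℂ) * I + (-1/16 : ℂ) * I ^ 2 + (1/8 : ℂ) * I ^ 3) * (starRingEnd ℂ d1) + ((-1/8 : ℂ) + (1/8 : ℂ) * I + (-1/8 : ℂ) * I ^ 2) * (starRingEnd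 ℂ d2) + ((-1/2 : ℂ)) * (starRingEnd ℂ d3) + ((-1/4 : ℂ)) * (starRingEnd ℂ d4) + ((-1/4 : ℂ) + (1/4 : ℂ) * I) * (starRingEnd ℂ d5)) * Complex.I_sq
  have hzb3 : b3 = 0 := by
    linear_combination ((-1/2 : ℂ) + (-1/8 : ℂ) * I) * eq0_1 +
      ((5/8 : ℂ) * I) * eq0_2 +
      ((-1/8 : ℂ) * I) * eq0_3 +
      ((19/48 : ℂ) * I) * eq1_2 +
      ((-1/48 : ℂ) * I) * eq1_3 +
      ((1/2 : ℂ)) * eq2_1 +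
      ((1/8 : ℂ) * I) * eq2_2 +
      ((1/4 : ℂ) * I) * eq3_2 +
      ((-1/8 : ℂ) * I) * eq3_3 +
      ((-1/4 : ℂ) * I) * eq4_1 +
      ((1/2 : ℂ) * I) * eq4_2 +
      ((1/4 : ℂ) * I) * eq5_1 +
      ((-1/16 : ℂ) * I) * eq5_2 +
      ((1/16 : ℂ) * I) * eq5_3 +
      ((-1/4 : ℂ) * I) * eq6_2 +
      ((-1/8 : ℂ) * I) * eq6_3 +
      ((-1/8 : ℂ) * I) * eq7_2 +
      ((-1/32 : ℂ) * I) * eq8_1 +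
      ((1/32 : ℂ) * I) * eq8_2 +
      ((1/16 : ℂ) * I) * eq8_3 +
      ((-1/16 : ℂ) * I) * eq9_3 +
      ((-1/12 : ℂ) * I) * eq10_2 +
      ((1/48 : ℂ) * I) * eq10_3 +
      ((-1/32 : ℂ) * I) * eq11_1 +
      (((1/8 : ℂ) * I + (3/16 : ℂ) * I ^ 2 + (1/8 : ℂ) * I ^ 3 + (-3/16 : ℂ) * I ^ 4) * a1 + ((1/4 : ℂ) * I ^ 2 + (-1/4 : ℂ) * I ^ 3) * a2 + ((3/16 : ℂ) * I) * b1 + ((1/2 : ℂ)) * b3 + ((-3/32 : ℂ) * I + (-1/8 : ℂ) * I ^ 2 + (-3/32 : ℂ) * I ^ 3) * c1 + ((-1/16 : ℂ) * I + (-1/8 : ℂ) * I ^ 2) * c2 + ((-1/4 : ℂ) * I) * c3 + ((-1/8 : ℂ) * I) * c4 + ((-1/4 : ℂ) * I) * c5 + ((-1/16 : ℂ) * I + (1/16 : ℂ) * I ^ 3) * d1 + ((1/16 : ℂ) * I ^ 2) * d2 + ((1/8 : ℂ) * I) * d5 + ((-1/8 : ℂ) * I + (3/16 : ℂ) * I ^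 2 + (-1/8 : ℂ) * I ^ 3 + (-3/16 : ℂ) * I ^ 4) * (starRingEnd ℂ a1) + ((1/4 : ℂ) * I ^ 2 + (1/4 : ℂ) * I ^ 3) * (starRingEnd ℂ a2) + ((-3/16 : ℂ) * I) * (starRingEnd ℂ b1) + ((1/2 : ℂ)) * (starRingEnd ℂ b3) + ((3/32 : ℂ) * I + (-1/8 : ℂ) * I ^ 2 + (3/32 : ℂ) * I ^ 3) * (starRingEnd ℂ c1) + ((1/16 : ℂ) * I + (-1/8 : ℂ) * I ^ 2) * (starRingEnd ℂ c2) + ((1/4 : ℂ) * I) * (starRingEnd ℂ c3) + ((1/8 : ℂ) * I) * (starRingEnd ℂ c4) + ((1/4 : ℂ) * I) * (starRingEnd ℂ c5) + ((1/16 : ℂ) * I + (-1/16 : ℂ) * I ^ 3) * (starRingEnd ℂ d1) + ((1/16 : ℂ) * I ^ 2) * (starRingEnd ℂ d2) + ((-1/8 : ℂ) * I) * (starRingEnd ℂ d5)) * Complex.I_sq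
  have hzb4 : b4 = 0 := by
    linear_combination ((-1/2 : ℂ) + (1/4 : ℂ) * I) * eq0_1 +
      ((1/8 : ℂ) * I) * eq0_2 +
      ((5/8 : ℂ) * I) * eq0_3 +
      ((-1/4 : ℂ) * I) * eq1_1 +
      ((1/48 : ℂ) * I) * eq1_2 +
      ((19/48 : ℂ) * I) * eq1_3 +
      ((1/8 : ℂ) * I) * eq2_3 +
      ((1/2 : ℂ)) * eq3_1 +
      ((1/8 : ℂ) * I) * eq3_2 +
      ((1/4 : ℂ) * I) * eq3_3 +
      ((-1/8 : ℂ) * I) * eq4_1 +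
      ((1/2 : ℂ) * I) * eq4_3 +
      ((-1/16 : ℂ) * I) * eq5_2 +
      ((-1/16 : ℂ) * I) * eq5_3 +
      ((1/8 : ℂ) * I) * eq6_2 +
      ((-1/4 : ℂ) * I) * eq6_3 +
      ((-1/8 : ℂ) * I) * eq7_3 +
      ((-1/32 : ℂ) * I) * eq8_1 +
      ((-1/16 : ℂ) * I) * eq8_2 +
      ((1/32 : ℂ) * I) * eq8_3 +
      ((1/16 : ℂ) * I) * eq9_2 +
      ((-1/48 : ℂ) * I) * eq10_2 +
      ((-1/12 : ℂ) * I) * eq10_3 +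
      ((1/32 : ℂ) * I) * eq11_1 +
      (((3/16 : ℂ) * I + (-1/8 : ℂ) * I ^ 2 + (-3/16 : ℂ) * I ^ 3 + (-1/8 : ℂ) * I ^ 4) * a1 + ((1/8 : ℂ) * I + (-1/4 : ℂ) * I ^ 2 + (-1/8 : ℂ) * I ^ 3) * a2 + ((3/16 : ℂ) * I ^ 2) * b1 + ((1/4 : ℂ) * I) * b2 + ((1/2 : ℂ)) * b4 + ((1/16 : ℂ) * I + (-1/16 : ℂ) * I ^ 3) * c1 + ((-1/16 : ℂ) * I ^ 2) * c2 + ((-1/8 : ℂ) * I) * c5 + ((-3/32 : ℂ) * I + (-1/8 : ℂ) * I ^ 2 + (-3/32 : ℂ) * I ^ 3) * d1 + ((-1/16 : ℂ) * I + (-1/8 : ℂ) * I ^ 2) * d2 + ((-1/4 : ℂ) * I) * d3 + ((-1/8 : ℂ) * I) * d4 + ((-1/4 : ℂ) * I) * d5 + ((-3/16 : ℂ) * I + (-1/8 : ℂ) * I ^ 2 + (3/16 : ℂ) * I ^ 3 + (-1/8 : ℂ) * I ^ 4) * (starRingEnd ℂ a1) + ((-1/8 : ℂ) * I + (-1/4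 : ℂ) * I ^ 2 + (1/8 : ℂ) * I ^ 3) * (starRingEnd ℂ a2) + ((3/16 : ℂ) * I ^ 2) * (starRingEnd ℂ b1) + ((-1/4 : ℂ) * I) * (starRingEnd ℂ b2) + ((1/2 : ℂ)) * (starRingEnd ℂ b4) + ((-1/16 : ℂ) * I + (1/16 : ℂ) * I ^ 3) * (starRingEnd ℂ c1) + ((-1/16 : ℂ) * I ^ 2) * (starRingEnd ℂ c2) + ((1/8 : ℂ) * I) * (starRingEnd ℂ c5) + ((3/32 : ℂ) * I + (-1/8 : ℂ) * I ^ 2 + (3/32 : ℂ) * I ^ 3) * (starRingEnd ℂ d1) + ((1/16 : ℂ) * I + (-1/8 : ℂ) * I ^ 2) * (starRingEnd ℂ d2) + ((1/4 : ℂ) * I) * (starRingEnd ℂ d3) + ((1/8 : ℂ) * I) * (starRingEnd ℂ d4) + ((1/4 : ℂ) * I) * (starRingEnd ℂ d5)) * Complex.I_sq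
  have hzc1 : c1 = 0 := by
    linear_combination ((1/2 : ℂ) + (3/8 : ℂ) * I) * eq0_2 +
      ((1/4 : ℂ) + (1/12 : ℂ) * I) * eq0_3 +
      ((-1/8 : ℂ) + (-1/24 : ℂ) * I) * eq1_2 +
      ((1/24 : ℂ) + (1/72 : ℂ) * I) * eq1_3 +
      ((-1/4 : ℂ) + (-1/12 : ℂ) * I) * eq2_2 +
      ((1/4 : ℂ) + (1/12 : ℂ) * I) * eq3_3 +
      ((-1/4 : ℂ) + (-3/16 : ℂ) * I) * eq4_2 +
      ((1/8 : ℂ) + (1/24 : ℂ) * I) * eq5_2 +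
      ((-1/8 : ℂ) + (-1/24 : ℂ) * I) * eq5_3 +
      ((1/4 : ℂ) + (1/12 : ℂ) * I) * eq6_3 +
      ((1/4 : ℂ) + (1/12 : ℂ) * I) * eq7_2 +
      ((-1/16 : ℂ) + (1/12 : ℂ) * I) * eq8_2 +
      ((-1/8 : ℂ) + (-1/24 : ℂ) * I) * eq8_3 +
      ((1/8 : ℂ) + (1/24 : ℂ) * I) * eq9_3 +
      ((-1/24 : ℂ) + (-1/72 : ℂ) * I) * eq10_3 +
      ((-1/48 : ℂ) * I) * eq12_2 +
      (((-1/4 : ℂ) + (7/24 : ℂ) * I + (-1/4 : ℂ) * I ^ 2 + (-17/24 : ℂ) * I ^ 3) * a1 + ((-1/2 : ℂ) * I + (-1/6 : ℂ) * I ^ 2) * a2 + ((15/16 : ℂ) + (1/4 : ℂ) * I + (-11/48 : ℂ) * I ^ 2) * c1 + ((1/8 : ℂ) + (1/24 : ℂ) * I) * c2 + ((1/4 : ℂ) + (1/12 : ℂ) * I) * c4 + ((1/8 : ℂ) + (1/24 : ℂ) * I + (-1/8 : ℂ) * I ^ 2 + (-1/24 : ℂ) * I ^ 3) * d1 + ((-1/8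 : ℂ) * I + (-1/24 : ℂ) * I ^ 2) * d2 + ((-1/4 : ℂ) + (-1/12 : ℂ) * I) * d5 + ((1/4 : ℂ) + (11/24 : ℂ) * I + (1/4 : ℂ) * I ^ 2 + (11/24 : ℂ) * I ^ 3) * (starRingEnd ℂ a1) + ((-1/2 : ℂ) * I + (-1/6 : ℂ) * I ^ 2) * (starRingEnd ℂ a2) + ((1/16 : ℂ) + (1/4 : ℂ) * I + (-5/48 : ℂ) * I ^ 2) * (starRingEnd ℂ c1) + ((-1/8 : ℂ) + (-1/24 : ℂ) * I) * (starRingEnd ℂ c2) + ((-1/4 : ℂ) + (-1/12 : ℂ) * I) * (starRingEnd ℂ c4) + ((-1/8 : ℂ) + (-1/24 : ℂ) * I + (1/8 : ℂ) * I ^ 2 + (1/24 : ℂ) * I ^ 3) * (starRingEnd ℂ d1) + ((-1/8 : ℂ) * I + (-1/24 : ℂ) * I ^ 2) * (starRingEnd ℂ d2) + ((1/4 : ℂ) + (1/12 : ℂ) * I) * (starRingEnd ℂ d5)) * Complex.I_sq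
  have hzc2 : c2 = 0 := by
    linear_combination ((-1/2 : ℂ) + (-11/4 : ℂ) * I) * eq0_2 +
      ((-1 : ℂ) + (1/4 : ℂ) * I) * eq0_3 +
      ((5/24 : ℂ) + (-11/12 : ℂ) * I) * eq1_2 +
      ((-3/4 : ℂ) + (1/24 : ℂ) * I) * eq1_3 +
      ((-1/4 : ℂ) * I) * eq2_2 +
      ((-1/4 : ℂ)) * eq2_3 +
      ((-1/4 : ℂ) + (-3/4 : ℂ) * I) * eq3_2 +
      ((-1/4 : ℂ) + (1/4 : ℂ) * I) * eq3_3 +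
      ((1/4 : ℂ) + (-5/4 : ℂ) * I) * eq4_2 +
      ((-1 : ℂ)) * eq4_3 +
      ((-1/8 : ℂ) + (1/2 : ℂ) * I) * eq5_2 +
      ((-1/8 : ℂ) * I) * eq5_3 +
      ((-1/4 : ℂ) + (1/4 : ℂ) * I) * eq6_2 +
      ((3/4 : ℂ) + (1/4 : ℂ) * I) * eq6_3 +
      ((1/4 : ℂ) * I) * eq7_2 +
      ((1/4 : ℂ)) * eq7_3 +
      ((1/8 : ℂ) + (5/16 : ℂ) * I) * eq8_2 +
      ((-3/16 : ℂ) + (-1/8 : ℂ) * I) * eq8_3 +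
      ((-1/8 : ℂ) + (-3/8 : ℂ) * I) * eq9_2 +
      ((1/8 : ℂ) + (1/8 : ℂ) * I) * eq9_3 +
      ((1/24 : ℂ) + (7/24 : ℂ) * I) * eq10_2 +
      ((1/8 : ℂ) + (-1/24 : ℂ) * I) * eq10_3 +
      (((-5/8 : ℂ) + (5/8 : ℂ) * I ^ 4) * a1 + ((-1/4 : ℂ) + (5/4 : ℂ) * I + (-1/4 : ℂ) * I ^ 2 + (3/4 : ℂ) * I ^ 3) * a2 + ((-1/8 : ℂ) + (1/16 : ℂ) * I + (3/8 : ℂ) * I ^ 2 + (5/16 : ℂ) * I ^ 3) * c1 + ((3/4 : ℂ) + (1/4 : ℂ) * I + (3/8 : ℂ) * I ^ 2) * c2 + ((1/2 : ℂ) * I) * c3 + ((1/4 : ℂ) * I) * c4 + ((1/4 : ℂ) + (3/4 : ℂ) * I) * c5 + ((5/16 : ℂ) + (3/8 : ℂ) * I + (1/16 : ℂ) * I ^ 2 + (-1/8 : ℂ) * I ^ 3) * d1 + ((1/8 : ℂ) + (1/8 : ℂ) * I + (-1/8 : ℂ) * I ^ 2) * d2 + ((1/2 : ℂ)) * d3 +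 ((1/4 : ℂ)) * d4 + ((1/4 : ℂ) + (-1/4 : ℂ) * I) * d5 + ((5/8 : ℂ) + (1/2 : ℂ) * I + (-3/4 : ℂ) * I ^ 2 + (1/2 : ℂ) * I ^ 3 + (5/8 : ℂ) * I ^ 4) * (starRingEnd ℂ a1) + ((1/4 : ℂ) + (5/4 : ℂ) * I + (-3/4 : ℂ) * I ^ 2 + (-3/4 : ℂ) * I ^ 3) * (starRingEnd ℂ a2) + ((1/8 : ℂ) + (-1/16 : ℂ) * I + (1/8 : ℂ) * I ^ 2 + (-5/16 : ℂ) * I ^ 3) * (starRingEnd ℂ c1) + ((1/4 : ℂ) + (3/8 : ℂ) * I ^ 2) * (starRingEnd ℂ c2) + ((-1/2 : ℂ) * I) * (starRingEnd ℂ c3) + ((-1/4 : ℂ) * I) * (starRingEnd ℂ c4) + ((-1/4 : ℂ) + (-3/4 : ℂ) * I) * (starRingEnd ℂ c5) + ((-5/16 : ℂ) + (1/8 : ℂ) * I + (-1/16 : ℂ) * I ^ 2 + (1/8 : ℂ) * I ^ 3) * (starRingEnd ℂ d1) + ((-1/8 : ℂ) + (1/8 : ℂ) * I + (-1/8 : ℂ)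 * I ^ 2) * (starRingEnd ℂ d2) + ((-1/2 : ℂ)) * (starRingEnd ℂ d3) + ((-1/4 : ℂ)) * (starRingEnd ℂ d4) + ((-1/4 : ℂ) + (1/4 : ℂ) * I) * (starRingEnd ℂ d5)) * Complex.I_sq
  have hzc3 : c3 = 0 := by
    linear_combination ((2 : ℂ) + (11/8 : ℂ) * I) * eq0_2 +
      ((1 : ℂ) * I) * eq0_3 +
      ((2/3 : ℂ) + (1/4 : ℂ) * I) * eq1_2 +
      ((3/4 : ℂ) * I) * eq1_3 +
      ((1/4 : ℂ) * I) * eq2_3 +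
      ((1/4 : ℂ) * I) * eq3_2 +
      ((1/4 : ℂ) * I) * eq3_3 +
      ((1/8 : ℂ) * I) * eq4_2 +
      ((1 : ℂ) * I) * eq4_3 +
      ((-1/4 : ℂ) * I) * eq5_2 +
      ((1/4 : ℂ) * I) * eq6_2 +
      ((-3/4 : ℂ) * I) * eq6_3 +
      ((-1/4 : ℂ) * I) * eq7_3 +
      ((-1/8 : ℂ) * I) * eq8_2 +
      ((3/16 : ℂ) * I) * eq8_3 +
      ((1/8 : ℂ) * I) * eq9_2 +
      ((-1/8 : ℂ) * I) * eq9_3 +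
      ((-1/6 : ℂ) + (-1/8 : ℂ) * I) * eq10_2 +
      ((-1/8 : ℂ) * I) * eq10_3 +
      (((5/8 : ℂ) * I + (-1/4 : ℂ) * I ^ 2 + (-3/8 : ℂ) * I ^ 3 + (-1/4 : ℂ) * I ^ 4) * a1 + ((1/4 : ℂ) * I + (-1/2 : ℂ) * I ^ 2 + (-1/4 : ℂ) * I ^ 3) * a2 + ((1/8 : ℂ) * I + (-1/8 : ℂ) * I ^ 3) * c1 + ((1/8 : ℂ) * I + (-1/8 : ℂ) * I ^ 2) * c2 + ((1/2 : ℂ)) * c3 + ((-1/4 : ℂ) * I) * c5 + ((-5/16 : ℂ) * I + (-1/4 : ℂ) * I ^ 2 + (-1/16 : ℂ) * I ^ 3) * d1 + ((-1/8 : ℂ) * I + (-1/8 : ℂ) * I ^ 2) * d2 + ((-1/2 : ℂ) * I) * d3 + ((-1/4 : ℂ) * I) * d4 + ((-1/4 : ℂ) * I) * d5 + ((-5/8 : ℂ) * I + (-1/4 : ℂ) * I ^ 2 + (3/8 : ℂ) * I ^ 3 + (-1/4 : ℂ) * I ^ 4) * (starRingEnd ℂ a1) + ((-1/4 : ℂ)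 * I + (-1/2 : ℂ) * I ^ 2 + (1/4 : ℂ) * I ^ 3) * (starRingEnd ℂ a2) + ((-1/8 : ℂ) * I + (1/8 : ℂ) * I ^ 3) * (starRingEnd ℂ c1) + ((-1/8 : ℂ) * I + (-1/8 : ℂ) * I ^ 2) * (starRingEnd ℂ c2) + ((1/2 : ℂ)) * (starRingEnd ℂ c3) + ((1/4 : ℂ) * I) * (starRingEnd ℂ c5) + ((5/16 : ℂ) * I + (-1/4 : ℂ) * I ^ 2 + (1/16 : ℂ) * I ^ 3) * (starRingEnd ℂ d1) + ((1/8 : ℂ) * I + (-1/8 : ℂ) * I ^ 2) * (starRingEnd ℂ d2) + ((1/2 : ℂ) * I) * (starRingEnd ℂ d3) + ((1/4 : ℂ) * I) * (starRingEnd ℂ d4) + ((1/4 : ℂ) * I) * (starRingEnd ℂ d5)) * Complex.I_sq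
  have hzc4 : c4 = 0 := by
    linear_combination ((-1/2 : ℂ)) * eq0_2 +
      ((1/2 : ℂ)) * eq2_2 +
      ((1/2 : ℂ) * I) * eq4_2 +
      ((-1/2 : ℂ) * I) * eq6_2 +
      (((1/2 : ℂ)) * c4 + ((1/2 : ℂ)) * (starRingEnd ℂ c4)) * Complex.I_sq
  have hzc5 : c5 = 0 := by
    linear_combination ((-1/2 : ℂ)) * eq0_2 +
      ((1/2 : ℂ)) * eq3_2 +
      ((1/2 : ℂ) * I) * eq4_2 +
      ((-1/2 : ℂ) * I) * eq7_2 +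
      (((1/2 : ℂ)) * c5 + ((1/2 : ℂ)) * (starRingEnd ℂ c5)) * Complex.I_sq
  have hzd1 : d1 = 0 := by
    linear_combination ((-1/4 : ℂ) + (-1/12 : ℂ) * I) * eq0_2 +
      ((1/2 : ℂ) + (3/8 : ℂ) * I) * eq0_3 +
      ((-1/24 : ℂ) + (-1/72 : ℂ) * I) * eq1_2 +
      ((-1/8 : ℂ) + (-1/24 : ℂ) * I) * eq1_3 +
      ((-1/4 : ℂ) + (-1/12 : ℂ) * I) * eq2_3 +
      ((-1/4 : ℂ) + (-1/12 : ℂ) * I) * eq3_2 +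
      ((-1/4 : ℂ) + (-3/16 : ℂ) * I) * eq4_3 +
      ((1/8 : ℂ) + (1/24 : ℂ) * I) * eq5_2 +
      ((1/8 : ℂ) + (1/24 : ℂ) * I) * eq5_3 +
      ((-1/4 : ℂ) + (-1/12 : ℂ) * I) * eq6_2 +
      ((1/4 : ℂ) + (1/12 : ℂ) * I) * eq7_3 +
      ((1/8 : ℂ) + (1/24 : ℂ) * I) * eq8_2 +
      ((-1/16 : ℂ) + (1/12 : ℂ) * I) * eq8_3 +
      ((-1/8 : ℂ) + (-1/24 : ℂ) * I) * eq9_2 +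
      ((1/24 : ℂ) + (1/72 : ℂ) * I) * eq10_2 +
      ((-1/48 : ℂ) * I) * eq12_3 +
      (((1/8 : ℂ) + (1/4 : ℂ) * I + (-19/24 : ℂ) * I ^ 2 + (1/4 : ℂ) * I ^ 3 + (1/12 : ℂ) * I ^ 4) * a1 + ((-1/4 : ℂ) + (-1/12 : ℂ) * I + (1/4 : ℂ) * I ^ 2 + (1/12 : ℂ) * I ^ 3) * a2 + ((-1/8 : ℂ) + (-1/24 : ℂ) * I + (1/8 : ℂ) * I ^ 2 + (1/24 : ℂ) * I ^ 3) * c1 + ((1/8 : ℂ) * I + (1/24 : ℂ) * I ^ 2) * c2 + ((1/4 : ℂ) + (1/12 : ℂ) * I) * c5 + ((15/16 : ℂ) + (1/4 : ℂ) * I + (-11/48 : ℂ) * I ^ 2) * d1 + ((1/8 : ℂ) + (1/24 : ℂ) * I) * d2 + ((1/4 : ℂ) + (1/12 : ℂ) * I) * d4 + ((-1/8 : ℂ) + (1/4 : ℂ) * I + (-1/24 : ℂ) * I ^ 2 + (1/4 : ℂ) * I ^ 3 + (1/12 : ℂ) * I ^ 4) * (starRingEnd ℂ a1) + ((1/4 :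 ℂ) + (1/12 : ℂ) * I + (-1/4 : ℂ) * I ^ 2 + (-1/12 : ℂ) * I ^ 3) * (starRingEnd ℂ a2) + ((1/8 : ℂ) + (1/24 : ℂ) * I + (-1/8 : ℂ) * I ^ 2 + (-1/24 : ℂ) * I ^ 3) * (starRingEnd ℂ c1) + ((1/8 : ℂ) * I + (1/24 : ℂ) * I ^ 2) * (starRingEnd ℂ c2) + ((-1/4 : ℂ) + (-1/12 : ℂ) * I) * (starRingEnd ℂ c5) + ((1/16 : ℂ) + (1/4 : ℂ) * I + (-5/48 : ℂ) * I ^ 2) * (starRingEnd ℂ d1) + ((-1/8 : ℂ) + (-1/24 : ℂ) * I) * (starRingEnd ℂ d2) + ((-1/4 : ℂ) + (-1/12 : ℂ) * I) * (starRingEnd ℂ d4)) * Complex.I_sq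
  have hzd2 : d2 = 0 := by
    linear_combination ((-3/2 : ℂ) + (1/4 : ℂ) * I) * eq0_2 +
      ((-1/4 : ℂ) * I) * eq0_3 +
      ((-5/6 : ℂ) + (1/24 : ℂ) * I) * eq1_2 +
      ((7/24 : ℂ) + (2/3 : ℂ) * I) * eq1_3 +
      ((-1/4 : ℂ)) * eq2_2 +
      ((1/4 : ℂ) * I) * eq2_3 +
      ((-3/4 : ℂ) + (1/4 : ℂ) * I) * eq3_2 +
      ((1/4 : ℂ) + (1/4 : ℂ) * I) * eq3_3 +
      ((-1 : ℂ)) * eq4_2 +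
      ((1/4 : ℂ) + (3/4 : ℂ) * I) * eq4_3 +
      ((1/4 : ℂ) + (-1/8 : ℂ) * I) * eq5_2 +
      ((-3/8 : ℂ) + (1/4 : ℂ) * I) * eq5_3 +
      ((1/4 : ℂ) + (1/4 : ℂ) * I) * eq6_2 +
      ((1/4 : ℂ) + (-3/4 : ℂ) * I) * eq6_3 +
      ((1/4 : ℂ)) * eq7_2 +
      ((-1/4 : ℂ) * I) * eq7_3 +
      ((1/16 : ℂ) + (-1/8 : ℂ) * I) * eq8_2 +
      ((-1/8 : ℂ) + (7/16 : ℂ) * I) * eq8_3 +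
      ((-1/8 : ℂ) + (1/8 : ℂ) * I) * eq9_2 +
      ((1/8 : ℂ) + (-3/8 : ℂ) * I) * eq9_3 +
      ((5/24 : ℂ) + (-1/24 : ℂ) * I) * eq10_2 +
      ((-1/24 : ℂ) + (-1/24 : ℂ) * I) * eq10_3 +
      (((-1/4 : ℂ) + (1/4 : ℂ) * I + (-1/2 : ℂ) * I ^ 2 + (1/4 : ℂ) * I ^ 3 + (-1/4 : ℂ) * I ^ 4) * a1 + ((1/2 : ℂ) + (-1/4 : ℂ) * I + (-1/4 : ℂ) * I ^ 3) * a2 + ((1/16 : ℂ) + (3/8 : ℂ) * I + (5/16 : ℂ) * I ^ 2 + (-1/8 : ℂ) * I ^ 3) * c1 + ((1/8 : ℂ) + (3/8 : ℂ) * I + (-1/8 : ℂ) * I ^ 2) * c2 + ((1/2 : ℂ)) * c3 + ((1/4 : ℂ)) * c4 + ((3/4 : ℂ) + (-1/4 : ℂ) * I) * c5 + ((1/8 : ℂ) + (-5/16 : ℂ) * I + (-3/8 : ℂ) * I ^ 2 + (-1/16 : ℂ) * I ^ 3) * d1 + ((3/4 : ℂ) + (-1/4 : ℂ) * I + (-1/8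 : ℂ) * I ^ 2) * d2 + ((-1/2 : ℂ) * I) * d3 + ((-1/4 : ℂ) * I) * d4 + ((-1/4 : ℂ) + (-1/4 : ℂ) * I) * d5 + ((1/4 : ℂ) + (-1 : ℂ) * I + (1 : ℂ) * I ^ 3 + (-1/4 : ℂ) * I ^ 4) * (starRingEnd ℂ a1) + ((-1/2 : ℂ) + (-3/4 : ℂ) * I + (-3/2 : ℂ) * I ^ 2 + (1/4 : ℂ) * I ^ 3) * (starRingEnd ℂ a2) + ((-1/16 : ℂ) + (1/8 : ℂ) * I + (-5/16 : ℂ) * I ^ 2 + (1/8 : ℂ) * I ^ 3) * (starRingEnd ℂ c1) + ((-1/8 : ℂ) + (3/8 : ℂ) * I + (-1/8 : ℂ) * I ^ 2) * (starRingEnd ℂ c2) + ((-1/2 : ℂ)) * (starRingEnd ℂ c3) + ((-1/4 : ℂ)) * (starRingEnd ℂ c4) + ((-3/4 : ℂ) + (1/4 : ℂ) * I) * (starRingEnd ℂ c5) + ((-1/8 : ℂ) + (5/16 : ℂ) * I + (-1/8 : ℂ) * I ^ 2 + (1/16 : ℂ) * I ^ 3) * (starRingEnd ℂ d1) + ((1/4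 : ℂ) + (-1/8 : ℂ) * I ^ 2) * (starRingEnd ℂ d2) + ((1/2 : ℂ) * I) * (starRingEnd ℂ d3) + ((1/4 : ℂ) * I) * (starRingEnd ℂ d4) + ((1/4 : ℂ) + (1/4 : ℂ) * I) * (starRingEnd ℂ d5)) * Complex.I_sq
  have hzd3 : d3 = 0 := by
    linear_combination ((-3/2 : ℂ) * I) * eq0_2 +
      ((2 : ℂ) + (11/8 : ℂ) * I) * eq0_3 +
      ((-5/6 : ℂ) * I) * eq1_2 +
      ((2/3 : ℂ) + (1/4 : ℂ) * I) * eq1_3 +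
      ((-1/4 : ℂ) * I) * eq2_2 +
      ((-3/4 : ℂ) * I) * eq3_2 +
      ((1/4 : ℂ) * I) * eq3_3 +
      ((-1 : ℂ) * I) * eq4_2 +
      ((1/8 : ℂ) * I) * eq4_3 +
      ((1/4 : ℂ) * I) * eq5_2 +
      ((-1/4 : ℂ) * I) * eq5_3 +
      ((1/4 : ℂ) * I) * eq6_2 +
      ((1/4 : ℂ) * I) * eq6_3 +
      ((1/4 : ℂ) * I) * eq7_2 +
      ((1/16 : ℂ) * I) * eq8_2 +
      ((-1/8 : ℂ) * I) * eq8_3 +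
      ((-1/8 : ℂ) * I) * eq9_2 +
      ((1/8 : ℂ) * I) * eq9_3 +
      ((5/24 : ℂ) * I) * eq10_2 +
      ((-1/6 : ℂ) + (-1/8 : ℂ) * I) * eq10_3 +
      (((-1/4 : ℂ) * I + (-3/8 : ℂ) * I ^ 2 + (-1/4 : ℂ) * I ^ 3 + (5/8 : ℂ) * I ^ 4) * a1 + ((-1/4 : ℂ) * I + (-1/2 : ℂ) * I ^ 2 + (3/4 : ℂ) * I ^ 3) * a2 + ((1/16 : ℂ) * I + (1/4 : ℂ) * I ^ 2 + (5/16 : ℂ) * I ^ 3) * c1 + ((1/8 : ℂ) * I + (3/8 : ℂ) * I ^ 2) * c2 + ((1/2 : ℂ) * I) * c3 + ((1/4 : ℂ) * I) * c4 + ((3/4 : ℂ) * I) * c5 + ((1/8 : ℂ) * I + (-1/8 : ℂ) * I ^ 3) * d1 + ((1/8 : ℂ) * I + (-1/8 : ℂ) * I ^ 2) * d2 + ((1/2 : ℂ)) * d3 + ((-1/4 : ℂ) * I) * d5 + ((1/4 : ℂ) * I + (-3/8 : ℂ) * I ^ 2 + (1/4 : ℂ) * I ^ 3 + (5/8 : ℂ)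 * I ^ 4) * (starRingEnd ℂ a1) + ((1/4 : ℂ) * I + (-1/2 : ℂ) * I ^ 2 + (-3/4 : ℂ) * I ^ 3) * (starRingEnd ℂ a2) + ((-1/16 : ℂ) * I + (1/4 : ℂ) * I ^ 2 + (-5/16 : ℂ) * I ^ 3) * (starRingEnd ℂ c1) + ((-1/8 : ℂ) * I + (3/8 : ℂ) * I ^ 2) * (starRingEnd ℂ c2) + ((-1/2 : ℂ) * I) * (starRingEnd ℂ c3) + ((-1/4 : ℂ) * I) * (starRingEnd ℂ c4) + ((-3/4 : ℂ) * I) * (starRingEnd ℂ c5) + ((-1/8 : ℂ) * I + (1/8 : ℂ) * I ^ 3) * (starRingEnd ℂ d1) + ((-1/8 : ℂ) * I + (-1/8 : ℂ) * I ^ 2) * (starRingEnd ℂ d2) + ((1/2 : ℂ)) * (starRingEnd ℂ d3) + ((1/4 : ℂ) * I) * (starRingEnd ℂ d5)) * Complex.I_sq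
  have hzd4 : d4 = 0 := by
    linear_combination ((-1/2 : ℂ)) * eq0_3 +
      ((1/2 : ℂ)) * eq2_3 +
      ((1/2 : ℂ) * I) * eq4_3 +
      ((-1/2 : ℂ) * I) * eq6_3 +
      (((1/2 : ℂ)) * d4 + ((1/2 : ℂ)) * (starRingEnd ℂ d4)) * Complex.I_sq
  have hzd5 : d5 = 0 := by
    linear_combination ((-1/2 : ℂ)) * eq0_3 +
      ((1/2 : ℂ)) * eq3_3 +
      ((1/2 : ℂ) * I) * eq4_3 +
      ((-1/2 : ℂ) * I) * eq7_3 +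
      (((1/2 : ℂ)) * d5 + ((1/2 : ℂ)) * (starRingEnd ℂ d5)) * Complex.I_sq
  have hF0 : F 0 = 0 := MvPolynomial.funext fun x => by
    rw [hev0 x, hza1, hza2]; simp
  have hF1 : F 1 = 0 := MvPolynomial.funext fun x => by
    rw [hev1 x, hzb1, hzb2, hzb3, hzb4]; simp
  have hF2 : F 2 = 0 := MvPolynomial.funext fun x => by
    rw [hev2 x, hzc1, hzc2, hzc3, hzc4, hzc5]; simp
  have hF3 : F 3 = 0 := MvPolynomial.funext fun x => by
    rw [hev3 x, hzd1, hzd2, hzd3, hzd4, hzd5]; simp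
  funext i; fin_cases i
  · exact hF0
  · exact hF1
  · exact hF2
  · exact hF3
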